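/- Let F_N be a finite complex time series of difference dimension d with characteristic polynomial P(z) = p_d z^d + … + p_0 (p_d = 1), and let L satisfy d < L ≤ N − d + 1. Then the L − d columns of the L × (L−d) banded Toeplitz matrix 𝐏 whose j-th column is (0,…,0, p_0, p_1, …, p_d, 0, …, 0)^T (with p_0 in row j) form a basis of the relations space ℜ^{(L)}(F_N), the complex-conjugate of the orthogonal complement of the trajectory space. -/

import Mathlib

open Polynomial Finset

/-- The span of the lagged vectors (trajectory space) of the first `N` values of
a sequence `f`, with window length `L`. -/
noncomputable def trajSpace (f : ℕ → ℂ) (N L : ℕ) : Submodule ℂ (Fin L → ℂ) :=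
  Submodule.span ℂ {v : Fin L → ℂ | ∃ i : ℕ, i + L ≤ N ∧ v = fun j : Fin L => f (i + (j : ℕ))}

/-- The Hermitian inner product on `Fin L → ℂ`. -/
noncomputable def hinner {L : ℕ} (u v : Fin L → ℂ) : ℂ :=
  ∑ i, (starRingEnd ℂ) (u i) * v i

/-- A vector belongs to the relations space of `f` iff its componentwise conjugate
is orthogonal to the trajectory space. -/
def inRelSpace (f : ℕ → ℂ) (N L : ℕ) (v : Fin L → ℂ) : Prop :=
  ∀ u ∈ trajSpace f N L, hinner u (fun i => (starRingEnd ℂ) (v i)) = 0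

/-!
Let `E` be the shift of sequences. For `c ≠ 0`, the operator `E - c` acts on `n ↦ p(n) cⁿ` as `c`
times the forward difference of `p`, so `(E - c)ᵉ` annihilates this sequence exactly when
`e > deg p`. Splitting off the other summands by coprime factors, the polynomials `r` with
`r(E) f = 0` are exactly the multiples of `Q`.

Identify `v ∈ ℂᴸ` with `V = ∑ vᵢ Xⁱ`: `v` is a relation iff `V(E) f` vanishes at `0, …, N - L`.
Since `V(E) f` again satisfies the recurrence of `Q` and `N - L + 1 ≥ deg Q`, it then vanishes
identically, i.e. `Q ∣ V`. The columns are the coefficient vectors of the `Xʲ Q`, which form a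
basis of the multiples of `Q` of degree `< L`.
-/

open fwdDiff

section Shift

variable (R : Type*) [CommSemiring R]

noncomputable def seqShift : Module.End R (ℕ → R) := LinearMap.funLeft R R (· + 1)

variable {R}

theorem seqShift_pow_apply (t : ℕ) (g : ℕ → R) (n : ℕ) : (seqShift R ^ t) g n = g (n + t) := by
  induction t generalizing g n with
  | zero => rfl
  | succ t ih => rw [pow_succ, Module.End.mul_apply, ih]; rfl

theorem aeval_seqShift_apply {q : R[X]} {M : ℕ} (hq : q.natDegree < M) (g : ℕ → R) (n : ℕ) :
    aeval (seqShift R) q g n = ∑ t ∈ range M, q.coeff t * g (n + t) := by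
  rw [aeval_eq_sum_range' hq, LinearMap.sum_apply, Finset.sum_apply]
  simp only [LinearMap.smul_apply, Pi.smul_apply, seqShift_pow_apply, smul_eq_mul]

theorem aeval_X_sub_C_pow_seqShift_mul_pow {R : Type*} [CommRing R] (c : R) (g : ℕ → R) (e : ℕ) :
    aeval (seqShift R) ((X - C c) ^ e) (fun n => g n * c ^ n) =
      fun n => ((Δ_[1])^[e] g) n * c ^ (n + e) := by
  induction e with
  | zero => simp
  | succ e ih =>
    funext n
    rw [pow_succ', map_mul, Module.End.mul_apply, ih, Function.iterate_succ_apply']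
    simp only [map_sub, aeval_X, aeval_C, LinearMap.sub_apply, Module.algebraMap_end_apply,
      Pi.sub_apply, Pi.smul_apply, smul_eq_mul, fwdDiff]
    change ((Δ_[1])^[e] g) (n + 1) * c ^ (n + 1 + e) - _ = _
    ring

theorem eq_zero_of_aeval_seqShift_eq_zero {q : R[X]} (hq : q.Monic) {g : ℕ → R}
    (hg : aeval (seqShift R) q g = 0) (h0 : ∀ n < q.natDegree, g n = 0) : g = 0 := by
  suffices h : ∀ n, g n = 0 from funext h
  intro n
  induction n using Nat.strong_induction_on with
  | _ n ih =>
    obtain hn | ⟨m, rfl⟩ : n < q.natDegree ∨ ∃ m, n = m + q.natDegree :=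
      (lt_or_ge n q.natDegree).imp_right fun h => ⟨n - q.natDegree, by omega⟩
    · exact h0 n hn
    have hlow : ∑ t ∈ range q.natDegree, q.coeff t * g (m + t) = 0 :=
      sum_eq_zero fun t ht => by rw [ih (m + t) (by have := mem_range.mp ht; omega), mul_zero]
    have hrec := congrFun hg m
    rwa [aeval_seqShift_apply (Nat.lt_succ_self _), sum_range_succ, hlow, hq.coeff_natDegree,
      one_mul, zero_add] at hrec

end Shift

section Annihilator

variable {R M : Type*} [CommSemiring R] [AddCommMonoid M] [Module R M] {T : Module.End R M}
  {x : M}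

theorem aeval_apply_eq_zero_of_dvd {q r : R[X]} (hqr : q ∣ r) (hq : aeval T q x = 0) :
    aeval T r x = 0 := by
  obtain ⟨s, rfl⟩ := hqr
  rw [mul_comm, map_mul, Module.End.mul_apply, hq, map_zero]

theorem aeval_apply_eq_zero_of_isCoprime {s t u : R[X]} (hsu : IsCoprime s u)
    (hs : aeval T (t * s) x = 0) (hu : aeval T (t * u) x = 0) : aeval T t x = 0 := by
  obtain ⟨a, b, hab⟩ := hsu
  have ht : t = a * (t * s) + b * (t * u) := by
    calc t = t * (a * s + b * u) := by rw [hab, mul_one]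
      _ = _ := by ring
  rw [ht, map_add, LinearMap.add_apply, aeval_apply_eq_zero_of_dvd (dvd_mul_left _ _) hs,
    aeval_apply_eq_zero_of_dvd (dvd_mul_left _ _) hu, add_zero]

end Annihilator

section PolyExp

theorem fwdDiff_iter_comp_natCast {R G : Type*} [AddCommMonoidWithOne R] [AddCommGroup G]
    (F : R → G) (e : ℕ) :
    (Δ_[1])^[e] (fun n : ℕ => F n) = fun n : ℕ => ((Δ_[1])^[e] F) (n : R) := by
  induction e with
  | zero => rfl
  | succ e ih =>
    funext n
    simp only [Function.iterate_succ_apply', ih, fwdDiff, Nat.cast_add, Nat.cast_one]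

variable {R : Type*} [CommRing R]

def polyExpSeq (p : R[X]) (c : R) : ℕ → R := fun n => p.eval (n : R) * c ^ n

theorem aeval_X_sub_C_pow_polyExpSeq (p : R[X]) (c : R) (e : ℕ) :
    aeval (seqShift R) ((X - C c) ^ e) (polyExpSeq p c) =
      fun n => ((Δ_[1])^[e] fun m : ℕ => p.eval (m : R)) n * c ^ (n + e) :=
  aeval_X_sub_C_pow_seqShift_mul_pow c _ e

theorem aeval_X_sub_C_pow_natDegree_succ_polyExpSeq (p : R[X]) (c : R) :
    aeval (seqShift R) ((X - C c) ^ (p.natDegree + 1)) (polyExpSeq p c) = 0 := by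
  rw [aeval_X_sub_C_pow_polyExpSeq, fwdDiff_iter_comp_natCast p.eval,
    fwdDiff_iter_degree_add_one_eq_zero]
  ext
  simp

theorem aeval_polyExpSeq_eq_zero_of_dvd {p q : R[X]} {c : R}
    (hq : (X - C c) ^ (p.natDegree + 1) ∣ q) : aeval (seqShift R) q (polyExpSeq p c) = 0 :=
  aeval_apply_eq_zero_of_dvd hq (aeval_X_sub_C_pow_natDegree_succ_polyExpSeq p c)

variable {K : Type*} [Field K] [CharZero K] {c : K} {p : K[X]}

theorem aeval_X_sub_C_pow_polyExpSeq_ne_zero (hc : c ≠ 0) (hp : p ≠ 0) {e : ℕ}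
    (he : e ≤ p.natDegree) : aeval (seqShift K) ((X - C c) ^ e) (polyExpSeq p c) ≠ 0 := by
  intro h
  have hg : (Δ_[1])^[e] (fun n : ℕ => p.eval (n : K)) = 0 := by
    funext n
    have hn := congrFun h n
    rw [aeval_X_sub_C_pow_polyExpSeq] at hn
    exact (mul_eq_zero.mp hn).resolve_right (pow_ne_zero _ hc)
  have htop : ((Δ_[1])^[p.natDegree] (fun n : ℕ => p.eval (n : K))) 0 =
      p.leadingCoeff * p.natDegree.factorial := by
    rw [fwdDiff_iter_comp_natCast p.eval, fwdDiff_iter_degree_eq_factorial]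
    simp
  have hzero : (Δ_[1])^[p.natDegree] (fun n : ℕ => p.eval (n : K)) = 0 := by
    rw [← Nat.sub_add_cancel he, Function.iterate_add_apply, hg]
    exact Function.iterate_fixed (by funext; simp [fwdDiff]) _
  rw [hzero] at htop
  exact mul_ne_zero (leadingCoeff_ne_zero.mpr hp) (by exact_mod_cast p.natDegree.factorial_ne_zero)
    htop.symm

theorem pow_dvd_of_aeval_polyExpSeq_eq_zero (hc : c ≠ 0) (hp : p ≠ 0) {r : K[X]}
    (hr : aeval (seqShift K) r (polyExpSeq p c) = 0) : (X - C c) ^ (p.natDegree + 1) ∣ r := by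
  rcases eq_or_ne r 0 with rfl | hr0
  · exact dvd_zero _
  obtain ⟨s, hrs, hs⟩ := exists_eq_pow_rootMultiplicity_mul_and_not_dvd r hr0 c
  have hcop : IsCoprime s ((X - C c) ^ (p.natDegree + 1)) :=
    ((irreducible_X_sub_C c).coprime_iff_not_dvd.mpr hs).pow_left.symm
  have hpow := aeval_apply_eq_zero_of_isCoprime hcop (hrs ▸ hr)
    (aeval_polyExpSeq_eq_zero_of_dvd (dvd_mul_left _ _))
  rw [← le_rootMultiplicity_iff hr0]
  by_contra! hlt
  exact aeval_X_sub_C_pow_polyExpSeq_ne_zero hc hp (by omega) hpow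

theorem aeval_sum_polyExpSeq_eq_zero_iff {ι : Type*} [Fintype ι] {lam : ι → K}
    (hinj : Function.Injective lam) (hne : ∀ k, lam k ≠ 0) {P : ι → K[X]} (hP : ∀ k, P k ≠ 0)
    (r : K[X]) : aeval (seqShift K) r (∑ k, polyExpSeq (P k) (lam k)) = 0 ↔
      (∏ k, (X - C (lam k)) ^ ((P k).natDegree + 1)) ∣ r := by
  classical
  set Q : ι → K[X] := fun k => (X - C (lam k)) ^ ((P k).natDegree + 1)
  have hcop : ∀ k k', k ≠ k' → IsCoprime (Q k) (Q k') :=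
    fun k k' hkk' => (pairwise_coprime_X_sub_C hinj hkk').pow
  refine ⟨fun hr => prod_dvd_of_coprime (fun k _ k' _ => hcop k k') fun k _ => ?_,
    fun hr => ?_⟩
  · set T := ∏ k' ∈ univ.erase k, Q k'
    have hT : aeval (seqShift K) T (∑ k, polyExpSeq (P k) (lam k)) =
        aeval (seqShift K) T (polyExpSeq (P k) (lam k)) := by
      rw [map_sum, sum_eq_single k (fun k' _ hk' => aeval_polyExpSeq_eq_zero_of_dvd
        (dvd_prod_of_mem Q (mem_erase.mpr ⟨hk', mem_univ k'⟩))) (by simp)]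
    have hrT : aeval (seqShift K) (r * T) (polyExpSeq (P k) (lam k)) = 0 := by
      rw [map_mul, Module.End.mul_apply, ← hT, ← Module.End.mul_apply, ← map_mul, mul_comm,
        map_mul, Module.End.mul_apply, hr, map_zero]
    have hkT : IsCoprime (Q k) T :=
      IsCoprime.prod_right fun k' hk' => hcop k k' (ne_of_mem_erase hk').symm
    exact hkT.dvd_of_dvd_mul_right (pow_dvd_of_aeval_polyExpSeq_eq_zero (hne k) (hP k) hrT)
  · rw [map_sum]
    exact sum_eq_zero fun k _ =>
      aeval_polyExpSeq_eq_zero_of_dvd ((dvd_prod_of_mem Q (mem_univ k)).trans hr)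

end PolyExp

section CoefficientVectors

variable {R : Type*} [CommRing R]

theorem toFn_apply (n : ℕ) (q : R[X]) (i : Fin n) : toFn n q i = q.coeff i := rfl

theorem sum_mul_toFn_eq_aeval_seqShift {L : ℕ} {q : R[X]} (hq : q.natDegree < L) (g : ℕ → R)
    (a : ℕ) : ∑ i : Fin L, g (a + i) * toFn L q i = aeval (seqShift R) q g a := by
  rw [aeval_seqShift_apply hq, ← Fin.sum_univ_eq_sum_range (fun t => q.coeff t * g (a + t))]
  simp only [toFn_apply, mul_comm]

theorem sum_smul_toFn_X_pow_mul [DecidableEq R] {n : ℕ} (L : ℕ) (q : R[X]) (g : Fin n → R) :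
    ∑ j, g j • toFn L (X ^ (j : ℕ) * q) = toFn L (ofFn n g * q) := by
  simp only [← map_smul, ← map_sum, ofFn_eq_sum_monomial, sum_mul, smul_eq_C_mul, ← mul_assoc,
    C_mul_X_pow_eq_monomial]

variable [IsDomain R] {q : R[X]} {n L : ℕ}

theorem linearIndependent_toFn_X_pow_mul (hq : q ≠ 0) (hnL : n + q.natDegree ≤ L) :
    LinearIndependent R fun j : Fin n => toFn L (X ^ (j : ℕ) * q) := by
  classical
  rcases n.eq_zero_or_pos with rfl | hn
  · exact linearIndependent_empty_type
  rw [Fintype.linearIndependent_iff]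
  intro g hg
  rw [sum_smul_toFn_X_pow_mul] at hg
  have hdeg : (ofFn n g * q).natDegree < L :=
    (natDegree_mul_le).trans_lt (by have := ofFn_natDegree_lt hn g; omega)
  have hprod : ofFn n g * q = 0 := by
    rw [← ofFn_comp_toFn_eq_id_of_natDegree_lt hdeg, hg, map_zero]
  have hg0 : ofFn n g = ofFn n 0 := by
    rw [(mul_eq_zero.mp hprod).resolve_right hq, map_zero]
  exact congrFun (injective_ofFn n hg0)

theorem toFn_mem_span_toFn_X_pow_mul (hq : q ≠ 0) {r : R[X]} (hqr : q ∣ r) (hr : r.natDegree < L)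
    (hLn : L ≤ n + q.natDegree) :
    toFn L r ∈ Submodule.span R (Set.range fun j : Fin n => toFn L (X ^ (j : ℕ) * q)) := by
  classical
  obtain ⟨s, rfl⟩ := hqr
  rcases eq_or_ne s 0 with rfl | hs
  · rw [mul_zero, map_zero]
    exact Submodule.zero_mem _
  have hsn : s.natDegree < n := by
    rw [natDegree_mul hq hs] at hr
    omega
  rw [Submodule.mem_span_range_iff_exists_fun]
  exact ⟨toFn n s, by rw [sum_smul_toFn_X_pow_mul, ofFn_comp_toFn_eq_id_of_natDegree_lt hsn,
    mul_comm]⟩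

end CoefficientVectors

theorem inRelSpace_iff (f : ℕ → ℂ) (N L : ℕ) (v : Fin L → ℂ) :
    inRelSpace f N L v ↔ ∀ a, a + L ≤ N → ∑ i : Fin L, f (a + i) * v i = 0 := by
  have hconj : ∀ u : Fin L → ℂ,
      hinner u (fun i => (starRingEnd ℂ) (v i)) = 0 ↔ (dotProductBilin ℂ ℂ).flip v u = 0 := by
    intro u
    simp [hinner, dotProduct, ← map_mul, ← map_sum]
  simp only [inRelSpace, hconj, ← LinearMap.mem_ker, ← SetLike.le_def, trajSpace,
    Submodule.span_le, Set.subset_def, Set.mem_ofPred_eq]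
  exact ⟨fun h a ha => h _ ⟨a, ha, rfl⟩, fun h _ ⟨a, ha, hu⟩ => hu ▸ h a ha⟩

theorem inRelSpace_toFn_iff (f : ℕ → ℂ) (N : ℕ) {L : ℕ} {q : ℂ[X]} (hq : q.natDegree < L) :
    inRelSpace f N L (toFn L q) ↔ ∀ a, a + L ≤ N → aeval (seqShift ℂ) q f a = 0 := by
  simp only [inRelSpace_iff, sum_mul_toFn_eq_aeval_seqShift hq]

theorem banded_toeplitz_columns_basis_of_relations_space_general
    (f : ℕ → ℂ) (m : ℕ) (lam : Fin m → ℂ) (P : Fin m → Polynomial ℂ)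
    (hinj : Function.Injective lam) (hne : ∀ k, lam k ≠ 0) (hP : ∀ k, P k ≠ 0)
    (hf : ∀ n : ℕ, f n = ∑ k, (P k).eval (n : ℂ) * lam k ^ n)
    (Q : Polynomial ℂ) (hQ : Q = ∏ k, (X - C (lam k)) ^ ((P k).natDegree + 1))
    (d : ℕ) (hd : d = Q.natDegree)
    (N L : ℕ) (hdL : d < L) (hLN : L + d ≤ N + 1)
    (col : Fin (L - d) → (Fin L → ℂ))
    (hcol : ∀ (j : Fin (L - d)) (i : Fin L),
      col j i = if (j : ℕ) ≤ (i : ℕ) then Q.coeff ((i : ℕ) - (j : ℕ)) else 0) :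
    LinearIndependent ℂ col ∧
    (∀ j, inRelSpace f N L (col j)) ∧
    (∀ v : Fin L → ℂ, inRelSpace f N L v → v ∈ Submodule.span ℂ (Set.range col)) := by
  have hann : ∀ r, aeval (seqShift ℂ) r f = 0 ↔ Q ∣ r := by
    have hf' : f = ∑ k, polyExpSeq (P k) (lam k) := funext fun n => by
      simp only [hf, polyExpSeq, Finset.sum_apply]
    exact hQ ▸ hf' ▸ aeval_sum_polyExpSeq_eq_zero_iff hinj hne hP
  have hQm : Q.Monic := hQ ▸ monic_prod_of_monic _ _ fun k _ => (monic_X_sub_C _).pow _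
  have hQ0 : Q ≠ 0 := hQm.ne_zero
  have hcol' : col = fun j : Fin (L - d) => toFn L (X ^ (j : ℕ) * Q) := by
    funext j i
    rw [hcol, toFn_apply, coeff_X_pow_mul']
  subst hcol' hd
  refine ⟨linearIndependent_toFn_X_pow_mul hQ0 (by omega), fun j => ?_, fun v hv => ?_⟩
  · have hdeg : (X ^ (j : ℕ) * Q).natDegree < L := by
      rw [natDegree_X_pow_mul _ hQ0]
      omega
    rw [inRelSpace_toFn_iff f N hdeg]
    intro a _
    rw [(hann _).mpr (dvd_mul_left Q _)]
    rfl
  · set q := ofFn L v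
    have hq : q.natDegree < L := ofFn_natDegree_lt (by omega) v
    rw [← toFn_comp_ofFn_eq_id L v, inRelSpace_toFn_iff f N hq] at hv
    have hqf : aeval (seqShift ℂ) q f = 0 := by
      refine eq_zero_of_aeval_seqShift_eq_zero hQm ?_ fun a ha => hv a (by omega)
      rw [← Module.End.mul_apply, ← map_mul]
      exact (hann _).mpr (dvd_mul_right Q q)
    rw [← toFn_comp_ofFn_eq_id L v]
    exact toFn_mem_span_toFn_X_pow_mul hQ0 ((hann q).mp hqf) hq (by omega)

/-- For a time series of difference dimension `d` with (monic) characteristic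
polynomial `Q`, and window length `d < L ≤ N - d + 1`, the `L - d` shifted-coefficient
columns of the banded Toeplitz matrix built from `Q` form a basis of the relations
space. -/
theorem banded_toeplitz_columns_basis_of_relations_space
    (f : ℕ → ℂ) (m : ℕ) (lam : Fin m → ℂ) (P : Fin m → Polynomial ℂ)
    (hinj : Function.Injective lam) (hne : ∀ k, lam k ≠ 0) (hP : ∀ k, P k ≠ 0)
    (hf : ∀ n : ℕ, f n = ∑ k, (P k).eval (n : ℂ) * lam k ^ n)
    (Q : Polynomial ℂ) (hQ : Q = ∏ k, (X - C (lam k)) ^ ((P k).natDegree + 1))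
    (d : ℕ) (hd : d = Q.natDegree)
    (N L : ℕ) (hdN : 2 * d ≤ N) (hdL : d < L) (hLN : L + d ≤ N + 1)
    (col : Fin (L - d) → (Fin L → ℂ))
    (hcol : ∀ (j : Fin (L - d)) (i : Fin L),
      col j i = if (j : ℕ) ≤ (i : ℕ) then Q.coeff ((i : ℕ) - (j : ℕ)) else 0) :
    LinearIndependent ℂ col ∧
    (∀ j, inRelSpace f N L (col j)) ∧
    (∀ v : Fin L → ℂ, inRelSpace f N L v → v ∈ Submodule.span ℂ (Set.range col)) :=
  banded_toeplitz_columns_basis_of_relations_space_general f m lam P hinj hne hP hf Q hQ d hd N L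
    hdL hLN col hcol
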